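/- Let n ≥ 2 and let r₀ ∈ ℂ satisfy G_n(r₀) = 0 (so f_n(r₀) ≠ 0). Let μ ∈ ℂ be nonzero with (μ + μ⁻¹)² = 2 + r₀ − 1/f_n(r₀)², and define A, B, W_n with r = r₀ and this μ. Set S₁ = W_n^n and S₂ = (AB⁻¹)^n. Then tr(S₁S₂⁻¹S₁⁻¹S₂) is an algebraic integer, even though μ + μ⁻¹ is not an algebraic integer. -/

import Mathlib

open Polynomial

/-- `f 0 = 0`, `f 1 = 1`, `f (j+2) = X * f (j+1) - f j`. -/
noncomputable def f : ℕ → Polynomial ℤ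
  | 0 => 0
  | 1 => 1
  | (j + 2) => X * f (j + 1) - f j

/-- `g j = f j - f (j-1)`. -/
noncomputable def g (j : ℕ) : Polynomial ℤ := f j - f (j - 1)

/-- `G j = g_{j+1}' * g_j - g_{j+1} * g_j'`. -/
noncomputable def G (j : ℕ) : Polynomial ℤ :=
  derivative (g (j + 1)) * g j - g (j + 1) * derivative (g j)

/-- `A = ((μ, 1), (0, μ⁻¹))`. -/
noncomputable def A (μ : ℂ) : Matrix (Fin 2) (Fin 2) ℂ := !![μ, 1; 0, μ⁻¹]

/-- `B = ((μ, 0), (2 − r, μ⁻¹))`. -/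
noncomputable def B (μ r : ℂ) : Matrix (Fin 2) (Fin 2) ℂ := !![μ, 0; 2 - r, μ⁻¹]

/-- `W n = (A B⁻¹)ⁿ (A⁻¹ B)ⁿ`. -/
noncomputable def W (n : ℕ) (μ r : ℂ) : Matrix (Fin 2) (Fin 2) ℂ :=
  (A μ * (B μ r)⁻¹) ^ n * ((A μ)⁻¹ * B μ r) ^ n



lemma f_rec (j : ℕ) : f (j + 2) = X * f (j + 1) - f j := rfl

lemma fI2 : ∀ m : ℕ, f (m+1) ^ 2 - X * f m * f (m+1) + f m ^ 2 = 1 := by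
  intro m
  induction m with
  | zero => simp [f]
  | succ k ih =>
    have h := f_rec k
    linear_combination ih + (f (k+2) - f k) * h

lemma g_succ (m : ℕ) : g (m+1) = f (m+1) - f m := by simp [g]

lemma G_rec (m : ℕ) : G (m+2) = G (m+1) + g (m+2) ^ 2 := by
  have hg : g (m+3) = X * g (m+2) - g (m+1) := by
    rw [g_succ, g_succ, g_succ, f_rec, f_rec]; ring
  simp only [G, hg]
  simp only [derivative_sub, derivative_mul, derivative_X, one_mul]
  ring

lemma G_one : G 1 = 1 := by
  have h2 : f 2 = X := by rw [f_rec]; simp [f]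
  simp [G, g_succ, h2, f]

lemma fI1 : ∀ m : ℕ, (2 + X) * G (m+1) = (2 * (m : Polynomial ℤ) + 2) + f (m+1) * (f (m+2) - f m) := by
  intro m
  induction m with
  | zero =>
    rw [G_one]
    have h2 : f 2 = X := by rw [f_rec]; simp [f]
    simp [f, h2]
  | succ k ih =>
    rw [G_rec, g_succ (k+1)]
    have h2 := fI2 (k+1)
    have e1 := f_rec (k+1)
    have e2 : f k = X * f (k+1) - f (k+2) := by linear_combination f_rec k
    rw [e1]
    rw [e2] at ih
    push_cast
    push_cast at ih
    linear_combination ih + 2 * h2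

lemma fI3 : ∀ m : ℕ, ∃ q : Polynomial ℤ, f (m+1) ^ 2 - G (m+1) = 2 * q := by
  intro m
  induction m with
  | zero => exact ⟨0, by rw [G_one]; simp [f]⟩
  | succ k ih =>
    obtain ⟨q, hq⟩ := ih
    refine ⟨q + f (k+1) * g (k+2), ?_⟩
    rw [G_rec, g_succ (k+1)]
    linear_combination hq

lemma fdeg : ∀ m : ℕ, (f (m+1)).Monic ∧ (f (m+1)).degree = (m : WithBot ℕ) := by
  intro m
  induction m using Nat.strong_induction_on with
  | _ m ih =>
    match m with
    | 0 => exact ⟨monic_one, degree_one⟩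
    | (k+1) =>
      obtain ⟨hm, hd⟩ := ih k (by omega)
      have hXdeg : (X * f (k+1)).degree = ((k+1 : ℕ) : WithBot ℕ) := by
        rw [degree_mul, degree_X, hd]; push_cast; ring
      have hlt : (f k).degree < (X * f (k+1)).degree := by
        rw [hXdeg]
        match k with
        | 0 => rw [show f 0 = (0:Polynomial ℤ) from rfl, degree_zero]
               exact bot_lt_iff_ne_bot.mpr (by simp)
        | (k'+1) =>
          rw [(ih k' (by omega)).2]
          exact_mod_cast Nat.lt_succ_of_lt (Nat.lt_succ_self k')
      constructor
      · rw [f_rec]; exact (monic_X.mul hm).sub_of_left hlt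
      · rw [f_rec, degree_sub_eq_left_of_degree_lt hlt, hXdeg]

lemma gdeg : ∀ m : ℕ, (g (m+2)).Monic ∧ (g (m+2)).degree = ((m+1 : ℕ) : WithBot ℕ) := by
  intro m
  obtain ⟨hm, hd⟩ := fdeg (m+1)
  have hlt : (f (m+1)).degree < (f (m+2)).degree := by
    rw [hd, (fdeg m).2]; exact_mod_cast Nat.lt_succ_self m
  rw [g_succ]
  exact ⟨hm.sub_of_left hlt, by rw [degree_sub_eq_left_of_degree_lt hlt, hd]⟩

lemma Gdeg : ∀ m : ℕ, (G (m+1)).Monic ∧ (G (m+1)).degree = ((2*m : ℕ) : WithBot ℕ) := by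
  intro m
  induction m with
  | zero => rw [G_one]; exact ⟨monic_one, degree_one⟩
  | succ k ih =>
    obtain ⟨hm, hd⟩ := ih
    obtain ⟨hgm, hgd⟩ := gdeg k
    have hsq : (g (k+2) ^ 2).Monic := hgm.pow 2
    have hsqd : (g (k+2) ^ 2).degree = ((2*(k+1) : ℕ) : WithBot ℕ) := by
      rw [degree_pow, hgd]; push_cast; ring
    have hlt : (G (k+1)).degree < (g (k+2) ^ 2).degree := by
      rw [hd, hsqd]; exact_mod_cast (by omega : 2*k < 2*(k+1))
    constructor
    · rw [G_rec]; exact hsq.add_of_right hlt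
    · rw [G_rec, degree_add_eq_right_of_degree_lt hlt, hsqd]

section Aux

variable {μ r : ℂ}


lemma sq_mat (M : Matrix (Fin 2) (Fin 2) ℂ) :
    M * M = M.trace • M - M.det • (1 : Matrix (Fin 2) (Fin 2) ℂ) := by
  ext i j
  fin_cases i <;> fin_cases j <;>
    simp [Matrix.mul_apply, Fin.sum_univ_two, Matrix.trace_fin_two,
      Matrix.det_fin_two, Matrix.one_apply] <;> ring

lemma pow_mat (M : Matrix (Fin 2) (Fin 2) ℂ) (hdet : M.det = 1) (k : ℕ) :
    M ^ (k+1) = (aeval M.trace (f (k+1))) • M - (aeval M.trace (f k)) • 1 := by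
  induction k with
  | zero => simp [f]
  | succ k ih =>
    rw [pow_succ, ih, sub_mul, smul_mul_assoc, smul_mul_assoc, one_mul, sq_mat M, hdet]
    have : aeval M.trace (f (k+2)) = M.trace * aeval M.trace (f (k+1)) - aeval M.trace (f k) := by
      rw [f_rec]; simp
    rw [this]
    module

lemma inv_sl2 (S : Matrix (Fin 2) (Fin 2) ℂ) (hdet : S.det = 1) :
    S⁻¹ = S.trace • 1 - S := by
  apply Matrix.inv_eq_right_inv
  rw [mul_sub, mul_smul_comm, mul_one, sq_mat S, hdet, one_smul]
  abel

lemma lin_mul_lin (x y z w : ℂ) (P Q : Matrix (Fin 2) (Fin 2) ℂ) :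
    (x•P - y•(1:Matrix (Fin 2) (Fin 2) ℂ)) * (z•Q - w•1)
      = (x*z)•(P*Q) - (x*w)•P - (y*z)•Q + (y*w)•1 := by
  simp only [mul_sub, sub_mul, smul_mul_assoc, mul_smul_comm, smul_smul, mul_one, one_mul]
  module

lemma A_inv (hμ : μ ≠ 0) : (A μ)⁻¹ = !![μ⁻¹, -1; 0, μ] := by
  apply Matrix.inv_eq_right_inv
  ext i j
  fin_cases i <;> fin_cases j <;>
    simp [A, Matrix.mul_apply, Fin.sum_univ_two, Matrix.one_apply] <;>
    field_simp

lemma B_inv (hμ : μ ≠ 0) : (B μ r)⁻¹ = !![μ⁻¹, 0; r - 2, μ] := by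
  apply Matrix.inv_eq_right_inv
  ext i j
  fin_cases i <;> fin_cases j <;>
    simp [B, Matrix.mul_apply, Fin.sum_univ_two, Matrix.one_apply] <;>
    field_simp <;> ring

lemma X_eq (hμ : μ ≠ 0) : A μ * (B μ r)⁻¹ = !![r - 1, μ; μ⁻¹ * (r - 2), 1] := by
  rw [B_inv hμ]
  ext i j
  fin_cases i <;> fin_cases j <;>
    simp [A, Matrix.mul_apply, Fin.sum_univ_two] <;> field_simp <;> ring

lemma Y_eq (hμ : μ ≠ 0) : (A μ)⁻¹ * B μ r = !![r - 1, -μ⁻¹; μ * (2 - r), 1] := by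
  rw [A_inv hμ]
  ext i j
  fin_cases i <;> fin_cases j <;>
    simp [B, Matrix.mul_apply, Fin.sum_univ_two] <;> field_simp <;> ring

end Aux

theorem longitude_trace_integral (n : ℕ) (hn : 2 ≤ n) (r₀ : ℂ)
    (hr : aeval r₀ (G n) = 0) (μ : ℂ) (hμ : μ ≠ 0)
    (hμr : (μ + μ⁻¹) ^ 2 = 2 + r₀ - 1 / (aeval r₀ (f n)) ^ 2) :
    IsIntegral ℤ
      (Matrix.trace
        ((W n μ r₀) ^ n * ((A μ * (B μ r₀)⁻¹) ^ n)⁻¹ * ((W n μ r₀) ^ n)⁻¹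
          * (A μ * (B μ r₀)⁻¹) ^ n)) ∧
    ¬ IsIntegral ℤ (μ + μ⁻¹) := by
  obtain ⟨m, rfl⟩ : ∃ m, n = m + 1 := ⟨n - 1, by omega⟩
  set XM := A μ * (B μ r₀)⁻¹ with hXM
  set YM := (A μ)⁻¹ * B μ r₀ with hYM
  set a : ℂ := aeval r₀ (f (m+1)) with ha
  set b : ℂ := aeval r₀ (f m) with hb
  -- basic matrix facts
  have hX : XM = !![r₀ - 1, μ; μ⁻¹ * (r₀ - 2), 1] := X_eq hμ
  have hY : YM = !![r₀ - 1, -μ⁻¹; μ * (2 - r₀), 1] := Y_eq hμ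
  have hμinv : μ * μ⁻¹ = 1 := mul_inv_cancel₀ hμ
  have trX : XM.trace = r₀ := by rw [hX]; rw [Matrix.trace_fin_two_of]; ring
  have trY : YM.trace = r₀ := by rw [hY]; rw [Matrix.trace_fin_two_of]; ring
  have detX : XM.det = 1 := by
    rw [hX, Matrix.det_fin_two_of]
    field_simp
    ring
  have detY : YM.det = 1 := by
    rw [hY, Matrix.det_fin_two_of]
    field_simp
    ring
  set c : ℂ := (XM * YM).trace with hc
  have hcval : c = (r₀-1)^2 + 1 + (2-r₀)*(μ^2 + (μ⁻¹)^2) := by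
    rw [hc, hX, hY, Matrix.mul_fin_two, Matrix.trace_fin_two_of]
    ring
  -- I2 evaluated
  have hI2v : a^2 - r₀ * b * a + b^2 = 1 := by
    have := congrArg (aeval r₀) (fI2 m)
    simpa [map_sub, map_add, map_mul, map_pow] using this
  -- a ≠ 0
  have ha0 : a ≠ 0 := by
    intro h0
    have h1 := congrArg (aeval r₀) (fI1 m)
    simp only [map_mul, map_add, map_sub, aeval_X, map_natCast, map_ofNat, hr, mul_zero] at h1
    rw [← ha, h0, zero_mul, add_zero] at h1
    have h2 : ((2 * m + 2 : ℕ) : ℂ) = 0 := by push_cast; linear_combination -h1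
    have h3 : (2 * m + 2 : ℕ) = 0 := Nat.cast_eq_zero.mp h2
    omega
  -- μ² + μ⁻²
  have hμ2 : μ^2 + (μ⁻¹)^2 = r₀ - 1/a^2 := by
    linear_combination hμr - 2 * hμinv
  have hca : a^2 * c = 2*a^2 + r₀ - 2 := by
    rw [hcval, hμ2]
    field_simp
    ring
  -- powers
  have hXn : XM ^ (m+1) = a • XM - b • 1 := by rw [pow_mat XM detX m, trX]
  have hYn : YM ^ (m+1) = a • YM - b • 1 := by rw [pow_mat YM detY m, trY]
  set WM := W (m+1) μ r₀ with hWM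
  have hWeq : WM = XM ^ (m+1) * YM ^ (m+1) := rfl
  have hW : WM = (a*a)•(XM*YM) - (a*b)•XM - (b*a)•YM + (b*b)•1 := by
    rw [hWeq, hXn, hYn, lin_mul_lin]
  have detW : WM.det = 1 := by
    rw [hWeq]
    simp [Matrix.det_mul, Matrix.det_pow, detX, detY]
  have trW : WM.trace = r₀ := by
    rw [hW]
    simp only [Matrix.trace_add, Matrix.trace_sub, Matrix.trace_smul, trX, trY,
      Matrix.trace_one, smul_eq_mul, ← hc]
    simp only [Fintype.card_fin]
    push_cast
    linear_combination hca + 2 * hI2v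
  -- S₁ S₂
  have hS1 : WM ^ (m+1) = a • WM - b • 1 := by rw [pow_mat WM detW m, trW]
  set p : ℂ := a * r₀ - 2 * b with hp
  have detS1 : (WM ^ (m+1)).det = 1 := by simp [Matrix.det_pow, detW]
  have detS2 : (XM ^ (m+1)).det = 1 := by simp [Matrix.det_pow, detX]
  have trS1 : (WM ^ (m+1)).trace = p := by
    rw [hS1]
    simp only [Matrix.trace_sub, Matrix.trace_smul, trW, Matrix.trace_one, smul_eq_mul,
      Fintype.card_fin]
    push_cast; ring
  have trS2 : (XM ^ (m+1)).trace = p := by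
    rw [hXn]
    simp only [Matrix.trace_sub, Matrix.trace_smul, trX, Matrix.trace_one, smul_eq_mul,
      Fintype.card_fin]
    push_cast; ring
  have hS1inv : (WM ^ (m+1))⁻¹ = p • 1 - WM ^ (m+1) := by rw [inv_sl2 _ detS1, trS1]
  have hS2inv : (XM ^ (m+1))⁻¹ = p • 1 - XM ^ (m+1) := by rw [inv_sl2 _ detS2, trS2]
  set S₁ := WM ^ (m+1) with hS₁
  set S₂ := XM ^ (m+1) with hS₂
  set q : ℂ := (S₁ * S₂).trace with hq
  have hS1S1 : S₁ * S₁ = p • S₁ - 1 := by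
    rw [sq_mat S₁, trS1, detS1, one_smul]
  have hS2S2 : S₂ * S₂ = p • S₂ - 1 := by
    rw [sq_mat S₂, trS2, detS2, one_smul]
  have detU : (S₁ * S₂).det = 1 := by rw [Matrix.det_mul, detS1, detS2, one_mul]
  have hUU : (S₁*S₂) * (S₁*S₂) = q • (S₁*S₂) - 1 := by
    rw [sq_mat (S₁*S₂), detU, one_smul, ← hq]
  -- trace identities
  have tApre : S₁ * (S₁ * S₂) = p • (S₁ * S₂) - S₂ := by
    rw [← mul_assoc, hS1S1, sub_mul, smul_mul_assoc, one_mul]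
  have tA : (S₁ * (S₁ * S₂)).trace = p * q - p := by
    rw [tApre]
    simp only [Matrix.trace_sub, Matrix.trace_smul, ← hq, trS2, smul_eq_mul]
  have tBpre : (S₁ * S₂) * S₂ = p • (S₁ * S₂) - S₁ := by
    rw [mul_assoc, hS2S2, mul_sub, mul_smul_comm, mul_one]
  have tB : ((S₁ * S₂) * S₂).trace = p * q - p := by
    rw [tBpre]
    simp only [Matrix.trace_sub, Matrix.trace_smul, ← hq, trS1, smul_eq_mul]
  have tC : ((S₁*S₂) * (S₁*S₂)).trace = q * q - 2 := by
    rw [hUU]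
    simp only [Matrix.trace_sub, Matrix.trace_smul, ← hq, Matrix.trace_one, smul_eq_mul,
      Fintype.card_fin]
    push_cast; ring
  -- main trace expansion
  have expand : S₁ * (p•(1:Matrix (Fin 2) (Fin 2) ℂ) - S₂) * (p•1 - S₁) * S₂
      = (p*p)•(S₁*S₂) - p•(S₁*(S₁*S₂)) - p•((S₁*S₂)*S₂) + (S₁*S₂)*(S₁*S₂) := by
    have e1 : S₁ * (p•(1:Matrix (Fin 2) (Fin 2) ℂ) - S₂) = p•S₁ - S₁*S₂ := by
      rw [mul_sub, mul_smul_comm, mul_one]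
    have e2 : (p•(1:Matrix (Fin 2) (Fin 2) ℂ) - S₁) * S₂ = p•S₂ - S₁*S₂ := by
      rw [sub_mul, smul_mul_assoc, one_mul]
    rw [mul_assoc (S₁ * _), e1, e2, sub_mul, mul_sub, mul_sub, smul_mul_assoc, smul_mul_assoc,
      mul_smul_comm, mul_smul_comm, smul_smul]
    simp only [← mul_assoc]
    abel
  have hTval : (S₁ * S₂⁻¹ * S₁⁻¹ * S₂).trace = q*q - p*p*q + 2*(p*p) - 2 := by
    rw [hS1inv, hS2inv, expand]
    simp only [Matrix.trace_add, Matrix.trace_sub, Matrix.trace_smul, tA, tB, tC, smul_eq_mul,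
      ← hq]
    ring
  -- value of q
  set cWX : ℂ := (WM * XM).trace with hcWX
  have tXX : (XM * XM).trace = r₀^2 - 2 := by
    rw [sq_mat XM, detX, one_smul]
    simp only [Matrix.trace_sub, Matrix.trace_smul, trX, Matrix.trace_one, smul_eq_mul,
      Fintype.card_fin]
    push_cast; ring
  have tYX : (YM * XM).trace = c := by rw [Matrix.trace_mul_comm, ← hc]
  have tXYX : ((XM * YM) * XM).trace = r₀ * c - r₀ := by
    rw [Matrix.trace_mul_comm, ← mul_assoc, sq_mat XM, detX, one_smul, sub_mul, smul_mul_assoc,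
      one_mul]
    simp only [Matrix.trace_sub, Matrix.trace_smul, ← hc, trX, trY, smul_eq_mul]
  have hWX : WM * XM = (a*a)•((XM*YM)*XM) - (a*b)•(XM*XM) - (b*a)•(YM*XM) + (b*b)•XM := by
    rw [hW, add_mul, sub_mul, sub_mul, smul_mul_assoc, smul_mul_assoc, smul_mul_assoc,
      smul_mul_assoc, one_mul]
  have ht3 : cWX = (a*a)*(r₀*c - r₀) - (a*b)*(r₀^2-2) - (b*a)*c + (b*b)*r₀ := by
    rw [hcWX, hWX]
    simp only [Matrix.trace_add, Matrix.trace_sub, Matrix.trace_smul, tXYX, tXX, tYX, trX,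
      smul_eq_mul]
  have hU2 : S₁ * S₂ = (a*a)•(WM*XM) - (a*b)•WM - (b*a)•XM + (b*b)•1 := by
    rw [hS1, hXn, lin_mul_lin]
  have ht4 : q = (a*a)*cWX - (a*b)*r₀ - (b*a)*r₀ + (b*b)*2 := by
    rw [hq, hU2]
    simp only [Matrix.trace_add, Matrix.trace_sub, Matrix.trace_smul, ← hcWX, trW, trX,
      Matrix.trace_one, smul_eq_mul, Fintype.card_fin]
    push_cast; ring
  have hqval : q = (r₀*a^2 - a*b)*(2*a^2 + r₀ - 2) - a^4*r₀ - a^3*b*(r₀^2-2) + a^2*b^2*r₀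
      - 2*a*b*r₀ + 2*b^2 := by
    linear_combination ht4 + (a*a)*ht3 + (r₀*a^2 - a*b)*hca
  -- integrality machinery
  have hr₀int : IsIntegral ℤ r₀ := ⟨G (m+1), (Gdeg m).1, by rw [← aeval_def]; exact hr⟩
  have haev : ∀ pp : Polynomial ℤ, IsIntegral ℤ (aeval r₀ pp) := by
    intro pp
    have hmem : aeval r₀ pp ∈ Algebra.adjoin ℤ ({r₀} : Set ℂ) := by
      rw [Algebra.adjoin_singleton_eq_range_aeval]
      exact ⟨pp, rfl⟩
    have hle : Algebra.adjoin ℤ ({r₀} : Set ℂ) ≤ integralClosure ℤ ℂ := by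
      apply Algebra.adjoin_le
      rintro x hx
      rw [Set.mem_singleton_iff] at hx
      subst hx
      exact hr₀int
    exact hle hmem
  constructor
  · rw [hTval]
    set PP : Polynomial ℤ := X * f (m+1) - 2 * f m with hPP
    set QP : Polynomial ℤ := (X * f (m+1)^2 - f (m+1) * f m) * (2 * f (m+1)^2 + X - 2)
      - f (m+1)^4 * X - f (m+1)^3 * f m * (X^2 - 2) + f (m+1)^2 * f m^2 * X
      - 2 * f (m+1) * f m * X + 2 * f m^2 with hQP
    have hPv : aeval r₀ PP = p := by
      rw [hPP]
      simp only [map_sub, map_mul, map_ofNat, aeval_X, ← ha, ← hb, hp]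
      try ring
    have hQv : aeval r₀ QP = q := by
      rw [hQP]
      simp only [map_add, map_sub, map_mul, map_pow, aeval_X, map_ofNat, ← ha, ← hb]
      rw [hqval]
      try ring
    have heq : q*q - p*p*q + 2*(p*p) - 2 = aeval r₀ (QP*QP - PP*PP*QP + 2*(PP*PP) - 2) := by
      simp only [map_sub, map_add, map_mul, map_ofNat, hPv, hQv]
    rw [heq]
    exact haev _
  · -- part 2
    intro ht
    have two_int : IsIntegral ℤ (2:ℂ) := by
      have h := haev (C 2)
      rwa [aeval_C, map_ofNat] at h
    obtain ⟨qpoly, hqpoly⟩ := fI3 m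
    have ha2 : a^2 = 2 * aeval r₀ qpoly := by
      have h5 := congrArg (aeval r₀) hqpoly
      simp only [map_sub, map_pow, map_mul, map_ofNat, hr, ← ha] at h5
      linear_combination h5
    have hs : IsIntegral ℤ ((a⁻¹ : ℂ)) := by
      apply IsIntegral.of_pow (n := 2) two_pos
      have e : (a⁻¹:ℂ)^2 = 2 + r₀ - (μ+μ⁻¹)^2 := by
        rw [hμr]
        field_simp
        ring
      rw [e]
      exact (two_int.add hr₀int).sub (ht.pow 2)
    have hqv0 : aeval r₀ qpoly ≠ 0 := by
      intro h0
      apply ha0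
      have hz2 : a^2 = 0 := by rw [ha2, h0, mul_zero]
      exact pow_eq_zero_iff (by norm_num) |>.mp hz2
    have hhalf : ((1:ℂ)/2) = aeval r₀ qpoly * (a⁻¹)^2 := by
      rw [inv_pow, ha2, mul_inv]
      field_simp [hqv0]
    have hint : IsIntegral ℤ ((1:ℂ)/2) := by
      rw [hhalf]
      exact (haev qpoly).mul (hs.pow 2)
    have hcast : algebraMap ℚ ℂ (1/2) = (1:ℂ)/2 := by norm_num
    rw [← hcast] at hint
    have h2 : IsIntegral ℤ ((1:ℚ)/2) := by
      have := (isIntegral_algebraMap_iff (R := ℤ) (A := ℚ) (B := ℂ)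
        ((algebraMap ℚ ℂ).injective)).mp hint
      simpa using this
    obtain ⟨z, hz⟩ := IsIntegrallyClosed.isIntegral_iff.mp h2
    have hz' : (z : ℚ) = 1/2 := by simpa using hz
    have : (2 * z : ℤ) = 1 := by
      have : ((2 * z : ℤ) : ℚ) = 1 := by push_cast; linear_combination 2 * hz'
      exact_mod_cast this
    omega
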